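/- Let γ₁₁, γ₁₂, γ₂₂, h, m¹, m², b : ℝ² → ℝ be differentiable with γ(x) ≠ 0 and h(x) ≠ 0 for all x (γ := γ₁₁γ₂₂ − γ₁₂²), and let g ∈ ℝ. Define the stress tensor T^{ij} = m^i m^j / h + ½ g h² γ^{ij} and the source S^i = −g h Σ_j γ^{ij} ∂_j b. Then the first momentum balance operator of the shallow water system on a manifold admits the flux/nonconservative splitting: at every point, Σ_j ∂_j T^{1j} + Σ_{j,k} Γ¹_{jk} T^{kj} + Σ_{j,k} Γ^j_{jk} T^{1k} − S¹ = ∂₁((m¹)²/h) + ∂₂(m¹m²/h) + (1/γ)[ g h γ₂₂ (∂₁h + ∂₁b) + ((m¹)²γ₂₂/h) ∂₁γ₁₁ − (2(m¹)²γ₁₂/h) ∂₁γ₁₂ − (1/(2h))(2m¹m²γ₁₂ + (m²)²γ₂₂ − (m¹)²γ₁₁) ∂₁γ₂₂ ] + (1/γ)[ −g h γ₁₂ (∂₂h + ∂₂b) + (m¹/(2h))(3m²γ₂₂ + m¹γ₁₂) ∂₂γ₁₁ + (m²/h)(m²γ₂₂ − m¹γ₁₂) ∂₂γ₁₂ + (m²/(2h))(m¹γ₁₁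 − m²γ₁₂) ∂₂γ₂₂ ]. -/

import Mathlib

open Real

noncomputable section

/-- Partial derivative in direction `j` (j = 0 ↦ ∂₁, j = 1 ↦ ∂₂) of a scalar
function on ℝ². -/
def pd (j : Fin 2) (f : ℝ × ℝ → ℝ) (x : ℝ × ℝ) : ℝ :=
  fderiv ℝ f x (if j = 0 then ((1 : ℝ), (0 : ℝ)) else ((0 : ℝ), (1 : ℝ)))

/-- Covariant components of the symmetric metric tensor (γ₂₁ = γ₁₂). -/
def gcov (g11 g12 g22 : ℝ × ℝ → ℝ) : Fin 2 → Fin 2 → ℝ × ℝ → ℝ :=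
  fun i j => !![g11, g12; g12, g22] i j

/-- Determinant γ = γ₁₁γ₂₂ − γ₁₂² of the metric. -/
def gdet (g11 g12 g22 : ℝ × ℝ → ℝ) (x : ℝ × ℝ) : ℝ :=
  g11 x * g22 x - g12 x ^ 2

/-- Contravariant (inverse) components of the metric:
γ^{11} = γ₂₂/γ, γ^{12} = γ^{21} = −γ₁₂/γ, γ^{22} = γ₁₁/γ. -/
def gcon (g11 g12 g22 : ℝ × ℝ → ℝ) : Fin 2 → Fin 2 → ℝ × ℝ → ℝ :=
  fun i j =>
    !![fun x => g22 x / gdet g11 g12 g22 x,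
       fun x => -g12 x / gdet g11 g12 g22 x;
       fun x => -g12 x / gdet g11 g12 g22 x,
       fun x => g11 x / gdet g11 g12 g22 x] i j

/-- Christoffel symbols
Γ^i_{jk} = ½ Σ_m γ^{im} (∂_j γ_{km} + ∂_k γ_{jm} − ∂_m γ_{jk}). -/
def Gamma (g11 g12 g22 : ℝ × ℝ → ℝ) (i j k : Fin 2) (x : ℝ × ℝ) : ℝ :=
  (1 / 2) * ∑ m : Fin 2, gcon g11 g12 g22 i m x *
    (pd j (gcov g11 g12 g22 k m) x + pd k (gcov g11 g12 g22 j m) x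
      - pd m (gcov g11 g12 g22 j k) x)

/-- Stress tensor T^{ij} = m^i m^j / h + ½ g h² γ^{ij}. -/
def stress (g11 g12 g22 h m1 m2 : ℝ × ℝ → ℝ) (g : ℝ) (i j : Fin 2)
    (y : ℝ × ℝ) : ℝ :=
  ![m1, m2] i y * ![m1, m2] j y / h y
    + (1 / 2) * g * h y ^ 2 * gcon g11 g12 g22 i j y

/-- Source S^i = −g h Σ_j γ^{ij} ∂_j b. -/
def source (g11 g12 g22 h b : ℝ × ℝ → ℝ) (g : ℝ) (i : Fin 2) (x : ℝ × ℝ) : ℝ :=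
  -(g * h x * ∑ j : Fin 2, gcon g11 g12 g22 i j x * pd j b x)

/-
The pressure part ½ g h² γ^{ij} of the stress contributes to the covariant divergence only
g h γ^{ij} ∂_j h: by the Leibniz rule the rest is ½ g h² times the covariant divergence of the
inverse metric, which vanishes because ∂_k γ^{ij} = −γ^{il} (∂_k γ_{lm}) γ^{mj}. Together with the
source this gives the g h (∂h + ∂b) terms. The advective part m^i m^j / h keeps its flux
derivatives, and writing out its Christoffel contractions gives the remaining ∂γ terms.
-/

section pd

variable {f g : ℝ × ℝ → ℝ} {x : ℝ × ℝ} {j : Fin 2}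

lemma pd_add (hf : DifferentiableAt ℝ f x) (hg : DifferentiableAt ℝ g x) :
    pd j (fun y => f y + g y) x = pd j f x + pd j g x := by
  simp [pd, fderiv_fun_add hf hg]

lemma pd_sub (hf : DifferentiableAt ℝ f x) (hg : DifferentiableAt ℝ g x) :
    pd j (fun y => f y - g y) x = pd j f x - pd j g x := by
  simp [pd, fderiv_fun_sub hf hg]

lemma pd_neg : pd j (fun y => -f y) x = -pd j f x := by
  simp [pd]

lemma pd_const_mul (c : ℝ) (hf : DifferentiableAt ℝ f x) :
    pd j (fun y => c * f y) x = c * pd j f x := by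
  simp [pd, fderiv_const_mul hf]

lemma pd_mul (hf : DifferentiableAt ℝ f x) (hg : DifferentiableAt ℝ g x) :
    pd j (fun y => f y * g y) x = pd j f x * g x + f x * pd j g x := by
  simp only [pd, fderiv_fun_mul hf hg, add_apply, smul_apply, smul_eq_mul]
  ring

lemma pd_pow_two (hf : DifferentiableAt ℝ f x) :
    pd j (fun y => f y ^ 2) x = 2 * f x * pd j f x := by
  simp [pd, fderiv_fun_pow 2 hf]

lemma pd_inv (hg : DifferentiableAt ℝ g x) (hgx : g x ≠ 0) :
    pd j (fun y => (g y)⁻¹) x = -pd j g x / g x ^ 2 := by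
  rw [pd, show (fun y => (g y)⁻¹) = (·⁻¹) ∘ g from rfl,
    fderiv_comp x (differentiableAt_inv hgx) hg, fderiv_inv]
  simp only [ContinuousLinearMap.comp_apply, ContinuousLinearMap.toSpanSingleton_apply,
    smul_eq_mul, pd]
  ring

lemma pd_div (hf : DifferentiableAt ℝ f x) (hg : DifferentiableAt ℝ g x) (hgx : g x ≠ 0) :
    pd j (fun y => f y / g y) x = (pd j f x * g x - f x * pd j g x) / g x ^ 2 := by
  simp only [div_eq_mul_inv (f _)]
  rw [pd_mul hf (hg.fun_inv hgx), pd_inv hg hgx]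
  field_simp
  ring

end pd

section metric

variable {g11 g12 g22 : ℝ × ℝ → ℝ} {x : ℝ × ℝ}

lemma pd_gdet (h11 : DifferentiableAt ℝ g11 x) (h12 : DifferentiableAt ℝ g12 x)
    (h22 : DifferentiableAt ℝ g22 x) (j : Fin 2) :
    pd j (gdet g11 g12 g22) x
      = pd j g11 x * g22 x + g11 x * pd j g22 x - 2 * g12 x * pd j g12 x := by
  change pd j (fun y => g11 y * g22 y - g12 y ^ 2) x = _
  rw [pd_sub (by fun_prop) (by fun_prop), pd_mul h11 h22, pd_pow_two h12]

lemma differentiableAt_gdet (h11 : DifferentiableAt ℝ g11 x) (h12 : DifferentiableAt ℝ g12 x)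
    (h22 : DifferentiableAt ℝ g22 x) : DifferentiableAt ℝ (gdet g11 g12 g22) x := by
  unfold gdet
  fun_prop

lemma differentiableAt_gcon (h11 : DifferentiableAt ℝ g11 x) (h12 : DifferentiableAt ℝ g12 x)
    (h22 : DifferentiableAt ℝ g22 x) (hγ : gdet g11 g12 g22 x ≠ 0) (i k : Fin 2) :
    DifferentiableAt ℝ (gcon g11 g12 g22 i k) x := by
  have hdet := differentiableAt_gdet h11 h12 h22
  fin_cases i <;> fin_cases k <;>
    simp only [gcon, Fin.zero_eta, Fin.mk_one, Matrix.of_apply, Matrix.cons_val_zero,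
      Matrix.cons_val_one] <;>
    fun_prop (disch := exact hγ)

lemma pd_gcon (h11 : DifferentiableAt ℝ g11 x) (h12 : DifferentiableAt ℝ g12 x)
    (h22 : DifferentiableAt ℝ g22 x) (hγ : gdet g11 g12 g22 x ≠ 0) (i j k : Fin 2) :
    pd j (gcon g11 g12 g22 i k) x
      = -∑ l, ∑ m, gcon g11 g12 g22 i l x * pd j (gcov g11 g12 g22 l m) x
          * gcon g11 g12 g22 m k x := by
  have hdet := differentiableAt_gdet h11 h12 h22
  have hpd := pd_gdet h11 h12 h22 j
  fin_cases i <;> fin_cases k <;>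
    simp (disch := fun_prop) only [gcon, gcov, Fin.zero_eta, Fin.mk_one, Matrix.of_apply,
      Matrix.cons_val_zero, Matrix.cons_val_one, Fin.sum_univ_two,
      pd_div (hg := hdet) (hgx := hγ), pd_neg, hpd] <;>
    field_simp <;> unfold gdet <;> ring

end metric

def covDiv (g11 g12 g22 : ℝ × ℝ → ℝ) (T : Fin 2 → Fin 2 → ℝ × ℝ → ℝ) (i : Fin 2)
    (x : ℝ × ℝ) : ℝ :=
  ∑ j, pd j (T i j) x + ∑ j, ∑ k, Gamma g11 g12 g22 i j k x * T k j x
    + ∑ j, ∑ k, Gamma g11 g12 g22 j j k x * T i k x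

section covDiv

variable {g11 g12 g22 : ℝ × ℝ → ℝ} {T U : Fin 2 → Fin 2 → ℝ × ℝ → ℝ} {i : Fin 2} {x : ℝ × ℝ}

lemma covDiv_add (hT : ∀ j, DifferentiableAt ℝ (T i j) x)
    (hU : ∀ j, DifferentiableAt ℝ (U i j) x) :
    covDiv g11 g12 g22 (fun i j y => T i j y + U i j y) i x
      = covDiv g11 g12 g22 T i x + covDiv g11 g12 g22 U i x := by
  simp only [covDiv, pd_add (hT _) (hU _), mul_add, Finset.sum_add_distrib]
  ring

lemma covDiv_mul_left {φ : ℝ × ℝ → ℝ} (hφ : DifferentiableAt ℝ φ x)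
    (hT : ∀ j, DifferentiableAt ℝ (T i j) x) :
    covDiv g11 g12 g22 (fun i j y => φ y * T i j y) i x
      = φ x * covDiv g11 g12 g22 T i x + ∑ j, pd j φ x * T i j x := by
  simp only [covDiv, pd_mul hφ (hT _), Fin.sum_univ_two]
  ring

lemma covDiv_gcon (h11 : DifferentiableAt ℝ g11 x) (h12 : DifferentiableAt ℝ g12 x)
    (h22 : DifferentiableAt ℝ g22 x) (hγ : gdet g11 g12 g22 x ≠ 0) (i : Fin 2) :
    covDiv g11 g12 g22 (gcon g11 g12 g22) i x = 0 := by
  simp only [covDiv, _root_.Gamma, pd_gcon h11 h12 h22 hγ, Fin.sum_univ_two]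
  fin_cases i <;>
    simp only [gcon, gcov, Fin.zero_eta, Fin.mk_one, Matrix.of_apply, Matrix.cons_val_zero,
      Matrix.cons_val_one] <;>
    ring

end covDiv

def advectiveFlux (h m1 m2 : ℝ × ℝ → ℝ) (i j : Fin 2) (y : ℝ × ℝ) : ℝ :=
  ![m1, m2] i y * ![m1, m2] j y / h y

lemma differentiableAt_advectiveFlux {h m1 m2 : ℝ × ℝ → ℝ} {x : ℝ × ℝ}
    (hh : DifferentiableAt ℝ h x) (hm1 : DifferentiableAt ℝ m1 x)
    (hm2 : DifferentiableAt ℝ m2 x) (hhx : h x ≠ 0) (i j : Fin 2) :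
    DifferentiableAt ℝ (advectiveFlux h m1 m2 i j) x := by
  change DifferentiableAt ℝ (fun y => advectiveFlux h m1 m2 i j y) x
  fin_cases i <;> fin_cases j <;>
    simp only [advectiveFlux, Fin.zero_eta, Fin.mk_one, Matrix.cons_val_zero,
      Matrix.cons_val_one] <;>
    fun_prop (disch := exact hhx)

lemma covDiv_advectiveFlux_zero (g11 g12 g22 h m1 m2 : ℝ × ℝ → ℝ) (x : ℝ × ℝ) :
    covDiv g11 g12 g22 (advectiveFlux h m1 m2) 0 x
      = pd 0 (fun y => m1 y ^ 2 / h y) x + pd 1 (fun y => m1 y * m2 y / h y) x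
        + (1 / gdet g11 g12 g22 x) *
            ((m1 x ^ 2 * g22 x / h x) * pd 0 g11 x
              - (2 * m1 x ^ 2 * g12 x / h x) * pd 0 g12 x
              - (1 / (2 * h x)) *
                  (2 * m1 x * m2 x * g12 x + m2 x ^ 2 * g22 x - m1 x ^ 2 * g11 x)
                  * pd 0 g22 x)
        + (1 / gdet g11 g12 g22 x) *
            ((m1 x / (2 * h x)) * (3 * m2 x * g22 x + m1 x * g12 x) * pd 1 g11 x
              + (m2 x / h x) * (m2 x * g22 x - m1 x * g12 x) * pd 1 g12 x
              + (m2 x / (2 * h x)) * (m1 x * g11 x - m2 x * g12 x) * pd 1 g22 x) := by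
  have hflux₀ : advectiveFlux h m1 m2 0 0 = fun y => m1 y ^ 2 / h y := by
    funext y
    simp only [advectiveFlux, Matrix.cons_val_zero, sq]
  have hflux₁ : advectiveFlux h m1 m2 0 1 = fun y => m1 y * m2 y / h y := rfl
  simp only [covDiv, _root_.Gamma, Fin.sum_univ_two, hflux₀, hflux₁]
  simp only [advectiveFlux, gcon, gcov, Matrix.of_apply, Matrix.cons_val_zero,
    Matrix.cons_val_one]
  ring

lemma covDiv_stress {g11 g12 g22 h m1 m2 : ℝ × ℝ → ℝ} {x : ℝ × ℝ} (g : ℝ)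
    (h11 : DifferentiableAt ℝ g11 x) (h12 : DifferentiableAt ℝ g12 x)
    (h22 : DifferentiableAt ℝ g22 x) (hh : DifferentiableAt ℝ h x)
    (hm1 : DifferentiableAt ℝ m1 x) (hm2 : DifferentiableAt ℝ m2 x)
    (hγ : gdet g11 g12 g22 x ≠ 0) (hhx : h x ≠ 0) (i : Fin 2) :
    covDiv g11 g12 g22 (stress g11 g12 g22 h m1 m2 g) i x
      = covDiv g11 g12 g22 (advectiveFlux h m1 m2) i x
        + g * h x * ∑ j, gcon g11 g12 g22 i j x * pd j h x := by
  have hgcon := differentiableAt_gcon h11 h12 h22 hγ i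
  have hpressure (j : Fin 2) : pd j (fun y => 1 / 2 * g * h y ^ 2) x = g * h x * pd j h x := by
    rw [pd_const_mul _ (by fun_prop), pd_pow_two hh]
    ring
  change covDiv g11 g12 g22 (fun i j y =>
      advectiveFlux h m1 m2 i j y + 1 / 2 * g * h y ^ 2 * gcon g11 g12 g22 i j y) i x = _
  rw [covDiv_add (differentiableAt_advectiveFlux hh hm1 hm2 hhx i)
      (fun j => (hh.pow 2).const_mul _ |>.mul (hgcon j)),
    covDiv_mul_left (by fun_prop) hgcon, covDiv_gcon h11 h12 h22 hγ]
  simp only [hpressure, mul_zero, zero_add, Finset.mul_sum]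
  congr 1
  exact Finset.sum_congr rfl fun j _ => by ring

theorem first_momentum_balance_splitting_general
    (g11 g12 g22 h m1 m2 b : ℝ × ℝ → ℝ) (g : ℝ)
    (h11 : Differentiable ℝ g11) (h12 : Differentiable ℝ g12)
    (h22 : Differentiable ℝ g22) (hh : Differentiable ℝ h)
    (hm1 : Differentiable ℝ m1) (hm2 : Differentiable ℝ m2)
    (hγ : ∀ x, gdet g11 g12 g22 x ≠ 0) (hhne : ∀ x, h x ≠ 0) :
    ∀ x : ℝ × ℝ,
      (∑ j : Fin 2, pd j (fun y => stress g11 g12 g22 h m1 m2 g 0 j y) x)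
        + (∑ j : Fin 2, ∑ k : Fin 2, Gamma g11 g12 g22 0 j k x *
            stress g11 g12 g22 h m1 m2 g k j x)
        + (∑ j : Fin 2, ∑ k : Fin 2, Gamma g11 g12 g22 j j k x *
            stress g11 g12 g22 h m1 m2 g 0 k x)
        - source g11 g12 g22 h b g 0 x
      = pd 0 (fun y => m1 y ^ 2 / h y) x + pd 1 (fun y => m1 y * m2 y / h y) x
        + (1 / gdet g11 g12 g22 x) *
            (g * h x * g22 x * (pd 0 h x + pd 0 b x)
              + (m1 x ^ 2 * g22 x / h x) * pd 0 g11 x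
              - (2 * m1 x ^ 2 * g12 x / h x) * pd 0 g12 x
              - (1 / (2 * h x)) *
                  (2 * m1 x * m2 x * g12 x + m2 x ^ 2 * g22 x - m1 x ^ 2 * g11 x)
                  * pd 0 g22 x)
        + (1 / gdet g11 g12 g22 x) *
            (-(g * h x * g12 x) * (pd 1 h x + pd 1 b x)
              + (m1 x / (2 * h x)) * (3 * m2 x * g22 x + m1 x * g12 x) * pd 1 g11 x
              + (m2 x / h x) * (m2 x * g22 x - m1 x * g12 x) * pd 1 g12 x
              + (m2 x / (2 * h x)) * (m1 x * g11 x - m2 x * g12 x) * pd 1 g22 x) := by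
  intro x
  change covDiv g11 g12 g22 (stress g11 g12 g22 h m1 m2 g) 0 x - source g11 g12 g22 h b g 0 x = _
  rw [covDiv_stress g (h11 x) (h12 x) (h22 x) (hh x) (hm1 x) (hm2 x) (hγ x) (hhne x),
    covDiv_advectiveFlux_zero]
  simp only [source, gcon, Fin.sum_univ_two, Matrix.of_apply, Matrix.cons_val_zero,
    Matrix.cons_val_one]
  ring

/-- flux/nonconservative splitting of the first momentum balance
operator of the shallow water system on a manifold. -/
theorem first_momentum_balance_splitting
    (g11 g12 g22 h m1 m2 b : ℝ × ℝ → ℝ) (g : ℝ)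
    (h11 : Differentiable ℝ g11) (h12 : Differentiable ℝ g12)
    (h22 : Differentiable ℝ g22) (hh : Differentiable ℝ h)
    (hm1 : Differentiable ℝ m1) (hm2 : Differentiable ℝ m2)
    (hb : Differentiable ℝ b)
    (hγ : ∀ x, gdet g11 g12 g22 x ≠ 0) (hhne : ∀ x, h x ≠ 0) :
    ∀ x : ℝ × ℝ,
      (∑ j : Fin 2, pd j (fun y => stress g11 g12 g22 h m1 m2 g 0 j y) x)
        + (∑ j : Fin 2, ∑ k : Fin 2, Gamma g11 g12 g22 0 j k x *
            stress g11 g12 g22 h m1 m2 g k j x)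
        + (∑ j : Fin 2, ∑ k : Fin 2, Gamma g11 g12 g22 j j k x *
            stress g11 g12 g22 h m1 m2 g 0 k x)
        - source g11 g12 g22 h b g 0 x
      = pd 0 (fun y => m1 y ^ 2 / h y) x + pd 1 (fun y => m1 y * m2 y / h y) x
        + (1 / gdet g11 g12 g22 x) *
            (g * h x * g22 x * (pd 0 h x + pd 0 b x)
              + (m1 x ^ 2 * g22 x / h x) * pd 0 g11 x
              - (2 * m1 x ^ 2 * g12 x / h x) * pd 0 g12 x
              - (1 / (2 * h x)) *
                  (2 * m1 x * m2 x * g12 x + m2 x ^ 2 * g22 x - m1 x ^ 2 * g11 x)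
                  * pd 0 g22 x)
        + (1 / gdet g11 g12 g22 x) *
            (-(g * h x * g12 x) * (pd 1 h x + pd 1 b x)
              + (m1 x / (2 * h x)) * (3 * m2 x * g22 x + m1 x * g12 x) * pd 1 g11 x
              + (m2 x / h x) * (m2 x * g22 x - m1 x * g12 x) * pd 1 g12 x
              + (m2 x / (2 * h x)) * (m1 x * g11 x - m2 x * g12 x) * pd 1 g22 x) :=
  first_momentum_balance_splitting_general g11 g12 g22 h m1 m2 b g h11 h12 h22 hh hm1 hm2 hγ hhne
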